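/- Let μ, σ : ℝ → ℝ be continuously differentiable functions with σ(θ) > 0 for all θ. Define F(θ) = ∫_{(-∞,0]} (1/σ(θ)) φ((y − μ(θ))/σ(θ)) dy, the probability that a Gaussian random variable with mean μ(θ) and standard deviation σ(θ) is at most 0. Then for every θ₀, F is differentiable at θ₀ and F'(θ₀) = ∫_{(-∞,0]} [ ((y − μ(θ₀))/σ(θ₀)²)·μ'(θ₀) + (((y − μ(θ₀))² − σ(θ₀)²)/σ(θ₀)³)·σ'(θ₀) ] · (1/σ(θ₀)) φ((y − μ(θ₀))/σ(θ₀)) dy. That is, the likelihood-ratio estimator 1{Y ≤ 0} · ∂ log f_θ(Y)/∂θ is an unbiased estimator of the derivative of θ ↦ Pr[Y_θ ≤ 0]. -/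

import Mathlib

/-!
With `Φ` the standard normal CDF, the probability is `F θ = Φ ((0 - μ θ) / σ θ)`, so the chain
rule gives `F' θ₀ = φ(w₀) (-μ' σ + μ σ') / σ²` with `w₀ = -μ / σ`. In the standardized variable
`w = (y - μ) / σ` the score times the density is `(μ' w + σ' (w² - 1)) φ(w) / σ²`, and
`(μ' w + σ' (w² - 1)) φ(w)` is the derivative of `-(μ' + σ' w) φ(w)`; integrating over
`(-∞, 0]` therefore gives the same value.
-/

open MeasureTheory ProbabilityTheory Real

/-- The standard normal probability density function `φ`. -/
noncomputable def stdGaussianPDF (x : ℝ) : ℝ := gaussianPDFReal 0 1 x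

open Set Filter Topology

lemma stdGaussianPDF_eq (x : ℝ) :
    stdGaussianPDF x = (√(2 * π))⁻¹ * rexp (-(1 / 2) * x ^ 2) := by
  simp only [stdGaussianPDF, gaussianPDFReal, NNReal.coe_one, mul_one, sub_zero]
  ring_nf

lemma integrable_pow_mul_stdGaussianPDF (n : ℕ) :
    Integrable fun x => x ^ n * stdGaussianPDF x := by
  have h := (integrable_rpow_mul_exp_neg_mul_sq (b := 1 / 2) (by norm_num)
    (s := n) (by linarith [n.cast_nonneg (α := ℝ)])).const_mul (√(2 * π))⁻¹
  refine h.congr (ae_of_all _ fun x => ?_)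
  simp only [rpow_natCast, stdGaussianPDF_eq]
  ring

lemma hasDerivAt_stdGaussianPDF (x : ℝ) :
    HasDerivAt stdGaussianPDF (-x * stdGaussianPDF x) x := by
  have h := (((hasDerivAt_pow 2 x).const_mul (-(1 / 2))).exp).const_mul (√(2 * π))⁻¹
  rw [show stdGaussianPDF = _ from funext stdGaussianPDF_eq]
  refine h.congr_deriv ?_
  norm_num
  ring

lemma continuous_stdGaussianPDF : Continuous stdGaussianPDF :=
  continuous_iff_continuousAt.2 fun x => (hasDerivAt_stdGaussianPDF x).continuousAt

noncomputable def stdGaussianCDF (x : ℝ) : ℝ := ∫ t in Iic x, stdGaussianPDF t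

lemma hasDerivAt_stdGaussianCDF (x : ℝ) :
    HasDerivAt stdGaussianCDF (stdGaussianPDF x) x := by
  have hint : Integrable stdGaussianPDF := integrable_gaussianPDFReal 0 1
  have hsplit :
      stdGaussianCDF = fun y => stdGaussianCDF 0 + ∫ t in (0 : ℝ)..y, stdGaussianPDF t := by
    ext y
    rw [← intervalIntegral.integral_Iic_sub_Iic hint.integrableOn hint.integrableOn]
    simp [stdGaussianCDF]
  rw [hsplit]
  exact (intervalIntegral.integral_hasDerivAt_right hint.intervalIntegrable
    (continuous_stdGaussianPDF.stronglyMeasurableAtFilter _ _)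
    continuous_stdGaussianPDF.continuousAt).const_add _

lemma tendsto_stdGaussianCDF_atBot : Tendsto stdGaussianCDF atBot (𝓝 0) :=
  tendsto_integral_Iic_zero tendsto_id

lemma tendsto_sub_div_atBot (m : ℝ) {s : ℝ} (hs : 0 < s) :
    Tendsto (fun y => (y - m) / s) atBot atBot :=
  (tendsto_atBot_add_const_right _ (-m) tendsto_id).atBot_div_const hs

lemma integral_Iic_rescale_of_hasDerivAt {G g : ℝ → ℝ} (hG : ∀ w, HasDerivAt G (g w) w)
    (hg : Integrable g) (hlim : Tendsto G atBot (𝓝 0)) (m c : ℝ) {s : ℝ} (hs : 0 < s) :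
    ∫ y in Iic c, (1 / s) * g ((y - m) / s) = G ((c - m) / s) := by
  have hderiv : ∀ y ∈ Iic c,
      HasDerivAt (fun y => G ((y - m) / s)) ((1 / s) * g ((y - m) / s)) y := fun y _ =>
    ((hG _).comp y (((hasDerivAt_id y).sub_const m).div_const s)).congr_deriv (mul_comm _ _)
  have hint : IntegrableOn (fun y => (1 / s) * g ((y - m) / s)) (Iic c) :=
    (((hg.comp_div hs.ne').comp_sub_right m).const_mul (1 / s)).integrableOn
  rw [integral_Iic_of_hasDerivAt_of_tendsto' hderiv hint
    (hlim.comp (tendsto_sub_div_atBot m hs)), sub_zero]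

open Polynomial in
lemma integrable_eval_mul_stdGaussianPDF (p : ℝ[X]) :
    Integrable fun x => p.eval x * stdGaussianPDF x := by
  induction p using Polynomial.induction_on' with
  | add p q hp hq =>
    exact (hp.add hq).congr (ae_of_all _ fun x => by simp only [Pi.add_apply, eval_add, add_mul])
  | monomial n c =>
    simpa only [eval_monomial, mul_assoc] using (integrable_pow_mul_stdGaussianPDF n).const_mul c

lemma hasDerivAt_neg_linear_mul_stdGaussianPDF (a b w : ℝ) :
    HasDerivAt (fun w => -(a + b * w) * stdGaussianPDF w)
      ((a * w + b * (w ^ 2 - 1)) * stdGaussianPDF w) w :=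
  ((((hasDerivAt_id w).const_mul b).const_add a).neg.mul
    (hasDerivAt_stdGaussianPDF w)).congr_deriv (by simp only [mul_one, id_eq, Pi.neg_apply]; ring)

open Polynomial in
lemma integral_Iic_score_mul_density (m a b c : ℝ) {s : ℝ} (hs : 0 < s) :
    ∫ y in Iic c, (((y - m) / s ^ 2) * a + (((y - m) ^ 2 - s ^ 2) / s ^ 3) * b) *
        ((1 / s) * stdGaussianPDF ((y - m) / s)) =
      stdGaussianPDF ((c - m) / s) * ((-a * s - (c - m) * b) / s ^ 2) := by
  set G := fun w => -(a + b * w) * stdGaussianPDF w / s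
  set g := fun w => (a * w + b * (w ^ 2 - 1)) * stdGaussianPDF w / s
  have hG : ∀ w, HasDerivAt G (g w) w :=
    fun w => (hasDerivAt_neg_linear_mul_stdGaussianPDF a b w).div_const s
  have hg : Integrable g := by
    refine ((integrable_eval_mul_stdGaussianPDF (C a * X + C b * (X ^ 2 - 1))).div_const s).congr
      (ae_of_all _ fun w => ?_)
    simp only [eval_add, eval_mul, eval_C, eval_X, eval_sub, eval_pow, eval_one, g]
  have hGint : Integrable G := by
    refine ((integrable_eval_mul_stdGaussianPDF (C a + C b * X)).neg.div_const s).congr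
      (ae_of_all _ fun w => ?_)
    simp only [eval_add, eval_C, eval_mul, eval_X, Pi.neg_apply, G]
    ring
  have hlim : Tendsto G atBot (𝓝 0) := tendsto_zero_of_hasDerivAt_of_integrableOn_Iic (a := 0)
    (fun w _ => hG w) hg.integrableOn hGint.integrableOn
  calc _ = ∫ y in Iic c, (1 / s) * g ((y - m) / s) :=
        setIntegral_congr_fun measurableSet_Iic fun y _ => by simp only [g]; field_simp
    _ = G ((c - m) / s) := integral_Iic_rescale_of_hasDerivAt hG hg hlim m c hs
    _ = _ := by simp only [G]; field_simp; ring

/-- Unbiasedness of the likelihood-ratio estimator: if `μ, σ : ℝ → ℝ` are continuously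
differentiable with `σ > 0`, and `F(θ) = Pr[Y_θ ≤ 0] = ∫_{(-∞,0]} (1/σ θ) φ((y − μ θ)/σ θ) dy`,
then `F` is differentiable at every `θ₀` with derivative given by integrating the score
function against the density over `(-∞, 0]`. -/
theorem lr_estimator_unbiased (μ σ : ℝ → ℝ)
    (hμ : ContDiff ℝ 1 μ) (hσ : ContDiff ℝ 1 σ) (hσpos : ∀ θ, 0 < σ θ) (θ₀ : ℝ) :
    HasDerivAt (fun θ => ∫ y in Set.Iic (0 : ℝ), (1 / σ θ) * stdGaussianPDF ((y - μ θ) / σ θ))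
      (∫ y in Set.Iic (0 : ℝ),
        (((y - μ θ₀) / (σ θ₀) ^ 2) * deriv μ θ₀ +
          (((y - μ θ₀) ^ 2 - (σ θ₀) ^ 2) / (σ θ₀) ^ 3) * deriv σ θ₀) *
          ((1 / σ θ₀) * stdGaussianPDF ((y - μ θ₀) / σ θ₀))) θ₀ := by
  have hF : (fun θ => ∫ y in Iic (0 : ℝ), (1 / σ θ) * stdGaussianPDF ((y - μ θ) / σ θ)) =
      fun θ => stdGaussianCDF ((0 - μ θ) / σ θ) :=
    funext fun θ => integral_Iic_rescale_of_hasDerivAt hasDerivAt_stdGaussianCDF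
      (integrable_gaussianPDFReal 0 1) tendsto_stdGaussianCDF_atBot (μ θ) 0 (hσpos θ)
  rw [hF, integral_Iic_score_mul_density _ _ _ _ (hσpos θ₀)]
  have hμ' := (hμ.differentiable one_ne_zero θ₀).hasDerivAt
  have hσ' := (hσ.differentiable one_ne_zero θ₀).hasDerivAt
  exact (hasDerivAt_stdGaussianCDF _).comp θ₀ ((hμ'.const_sub 0).div hσ' (hσpos θ₀).ne')
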